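/- arXiv:1510.04035 — 5 statements merged into one kernel-verified Lean document; each statement's English description precedes it below -/
import Mathlib

section
/- If G' is obtained from an undirected graph G by replacing every edge by a path of length three (subdividing each edge twice), then the Euler tours of G are in bijection with the Euler tours of G'. -/
open SimpleGraph

/-- The smaller endpoint of an edge (under a fixed linear order on the vertices). -/
def Sym2.emin {V : Type} [LinearOrder V] (e : Sym2 V) : V :=
  Sym2.lift ⟨min, fun _ _ => min_comm _ _⟩ e

/-- The larger endpoint of an edge. -/
def Sym2.emax {V : Type} [LinearOrder V] (e : Sym2 V) : V :=
  Sym2.lift ⟨max, fun _ _ => max_comm _ _⟩ e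

/-- Base relation for the graph `G'` obtained from `G` by replacing every edge
`e = (u,v)` by the path `u - x_e - y_e - v`: the new vertices are pairs `(e, b)`
where `(e, false)` is `x_e` (attached to the smaller endpoint of `e`) and
`(e, true)` is `y_e` (attached to the larger endpoint). -/
def subdivRel {V : Type} [LinearOrder V] (G : SimpleGraph V) :
    (V ⊕ (G.edgeSet × Bool)) → (V ⊕ (G.edgeSet × Bool)) → Prop
  | Sum.inl u, Sum.inr (e, b) => b = false ∧ u = Sym2.emin (e : Sym2 V)
  | Sum.inr (e, b), Sum.inl v => b = true ∧ v = Sym2.emax (e : Sym2 V)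
  | Sum.inr (e, b), Sum.inr (e', b') => (e : Sym2 V) = (e' : Sym2 V) ∧ b = false ∧ b' = true
  | _, _ => False

/-- The graph obtained from `G` by subdividing every edge twice
(replacing each edge by a path of length three). -/
def subdiv2 {V : Type} [LinearOrder V] (G : SimpleGraph V) :
    SimpleGraph (V ⊕ (G.edgeSet × Bool)) :=
  SimpleGraph.fromRel (subdivRel G)

open Classical in
/-- Two closed Eulerian walks represent the same Euler tour when one is a
rotation of the other (same cyclic sequence of edges). -/
noncomputable def EulerTourRel {V : Type} (G : SimpleGraph V)
    (x y : Σ v : V, {p : G.Walk v v // p.IsEulerian}) : Prop :=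
  ∃ h : y.1 ∈ x.2.1.support, y.2.1 = x.2.1.rotate y.1 h

/-- The Euler tours of `G`: closed Eulerian walks up to rotation. -/
noncomputable def EulerTours {V : Type} (G : SimpleGraph V) : Type :=
  Quot (EulerTourRel G)

open Classical in
/-- Two Hamiltonian cycles (as closed walks) are identified when one is a
rotation of the other. -/
noncomputable def HamCycleRel {V : Type} (G : SimpleGraph V)
    (x y : Σ v : V, {p : G.Walk v v // p.IsHamiltonianCycle}) : Prop :=
  ∃ h : y.1 ∈ x.2.1.support, y.2.1 = x.2.1.rotate y.1 h

/-- The Hamiltonian cycles of `G`, up to rotation. -/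
noncomputable def HamCycles {V : Type} (G : SimpleGraph V) : Type :=
  Quot (HamCycleRel G)

/-!
Subdividing a closed walk of `G` gives a closed walk of `subdiv2 G`, which is Eulerian exactly
when the original one is, since every edge of `G` contributes its three new edges once per
traversal. Rotation classes of closed walks are the orbits of the one-step rotation `shift`, and
one step of a walk of `G` is three steps of its subdivision, so subdivision descends to Euler
tours. It is injective because a rotation of a subdivided walk that starts at an old vertex has
rotated by a multiple of three steps, and surjective because an Euler tour of `subdiv2 G` passes
through an old vertex and, being a trail, must cross every subdivided edge from end to end.
-/

namespace SimpleGraph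

variable {W : Type} {H : SimpleGraph W} {u v w : W}

theorem Walk.IsTrail.ne_of_cons_cons {x y z : W} {h : H.Adj x y} {h' : H.Adj y z}
    {p : H.Walk z w} (hp : (Walk.cons h (.cons h' p)).IsTrail) : z ≠ x := by
  rintro rfl
  simp [Walk.isTrail_cons, Sym2.eq_swap] at hp

abbrev ClosedWalk (H : SimpleGraph W) : Type := Σ v : W, H.Walk v v

namespace ClosedWalk

def shift : ClosedWalk H → ClosedWalk H
  | ⟨v, .nil⟩ => ⟨v, .nil⟩
  | ⟨_, .cons h p⟩ => ⟨_, p.concat h⟩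

theorem shift_iterate_append (p : H.Walk u w) (q : H.Walk w u) :
    shift^[p.length] ⟨u, p.append q⟩ = ⟨w, q.append p⟩ := by
  induction p with
  | nil => simp
  | cons h p ih =>
    rw [Walk.length_cons, Function.iterate_succ_apply, Walk.cons_append]
    change shift^[p.length] ⟨_, (p.append q).concat h⟩ = _
    rw [← Walk.append_concat, ih, Walk.concat_append]

theorem shift_iterate_length (c : ClosedWalk H) : shift^[c.2.length] c = c := by
  simpa using shift_iterate_append c.2 .nil

theorem rotate_eq_shift_iterate [DecidableEq W] (c : H.Walk v v) (h : u ∈ c.support) :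
    (⟨u, c.rotate u h⟩ : ClosedWalk H) = shift^[(c.takeUntil u h).length] ⟨v, c⟩ := by
  have := shift_iterate_append (c.takeUntil u h) (c.dropUntil u h)
  rw [c.take_spec h] at this
  exact this.symm

theorem exists_shift_eq_rotate [DecidableEq W] (c : H.Walk v v) :
    ∃ u h, shift ⟨v, c⟩ = ⟨u, c.rotate u h⟩ := by
  cases c with
  | nil => exact ⟨v, by simp, rfl⟩
  | cons h p =>
    refine ⟨_, List.mem_cons_of_mem _ p.start_mem_support, ?_⟩
    simp [shift, Walk.rotate, Walk.takeUntil, Walk.dropUntil, h.ne, Walk.concat_eq_append]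

theorem exists_shift_iterate_eq_symm {c d : ClosedWalk H} (h : ∃ n, shift^[n] c = d) :
    ∃ n, shift^[n] d = c := by
  obtain ⟨n, rfl⟩ := h
  obtain ⟨v, p⟩ := c
  cases p with
  | nil => exact ⟨0, Function.iterate_fixed rfl n⟩
  | cons h p =>
    have hper : Function.IsPeriodicPt shift _ (⟨v, .cons h p⟩ : ClosedWalk H) :=
      shift_iterate_length _
    refine ⟨(Walk.cons h p).length * n - n, ?_⟩
    rw [← Function.iterate_add_apply, Nat.sub_add_cancel (Nat.le_mul_of_pos_left n (by simp))]
    exact (hper.mul_const n).eq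

end ClosedWalk

open Classical in
abbrev ClosedEulerian (H : SimpleGraph W) : Type := Σ v : W, {p : H.Walk v v // p.IsEulerian}

namespace ClosedEulerian

/- `EulerTourRel` uses classical decidable equality, which is not defeq to the instance coming
from a linear order; stating everything else through trails and edge lists avoids the clash. -/
def mk' (p : H.Walk v v) (hp : p.IsTrail) (hcover : ∀ e ∈ H.edgeSet, e ∈ p.edges) :
    ClosedEulerian H :=
  ⟨v, p, by classical exact hp.isEulerian_of_forall_mem hcover⟩

theorem isTrail (x : ClosedEulerian H) : x.2.1.IsTrail := by
  classical exact x.2.2.isTrail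

theorem mem_edges (x : ClosedEulerian H) {e : Sym2 W} (he : e ∈ H.edgeSet) :
    e ∈ x.2.1.edges := by
  classical exact x.2.2.mem_edges_iff.2 he

def toClosedWalk (x : ClosedEulerian H) : ClosedWalk H := ⟨x.1, x.2.1⟩

theorem toClosedWalk_injective : Function.Injective (toClosedWalk (H := H)) := by
  rintro ⟨v, p, hp⟩ ⟨w, q, hq⟩ h
  obtain ⟨rfl, h⟩ := Sigma.mk.inj_iff.1 h
  cases eq_of_heq h
  rfl

open Classical in
noncomputable def rotate (x : ClosedEulerian H) (hu : u ∈ x.2.1.support) : ClosedEulerian H :=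
  mk' (x.2.1.rotate u hu) (x.isTrail.rotate hu) fun _ he =>
    (x.2.1.rotate_edges u hu).mem_iff.2 (x.mem_edges he)

theorem eulerTourRel_rotate (x : ClosedEulerian H) (hu : u ∈ x.2.1.support) :
    EulerTourRel H x (x.rotate hu) :=
  ⟨hu, rfl⟩

open Classical in
theorem exists_eulerTourRel_fst_eq (x : ClosedEulerian H) (hu : u ∈ x.2.1.support) :
    ∃ (q : H.Walk u u) (hq : q.IsEulerian), EulerTourRel H x ⟨u, q, hq⟩ :=
  ⟨_, _, x.eulerTourRel_rotate hu⟩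

theorem exists_eulerTourRel_shift (x : ClosedEulerian H) :
    ∃ y : ClosedEulerian H, EulerTourRel H x y ∧ y.toClosedWalk = x.toClosedWalk.shift := by
  classical
  obtain ⟨u, hu, hshift⟩ := ClosedWalk.exists_shift_eq_rotate x.2.1
  exact ⟨x.rotate hu, x.eulerTourRel_rotate hu, hshift.symm⟩

theorem exists_shift_iterate_eq_of_eqvGen {x y : ClosedEulerian H}
    (h : Relation.EqvGen (EulerTourRel H) x y) :
    ∃ n, ClosedWalk.shift^[n] x.toClosedWalk = y.toClosedWalk := by
  classical
  induction h with
  | rel x y hxy =>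
    obtain ⟨hu, hy⟩ := hxy
    refine ⟨_, (ClosedWalk.rotate_eq_shift_iterate x.2.1 hu).symm.trans ?_⟩
    simp only [toClosedWalk, ← hy]
  | refl x => exact ⟨0, rfl⟩
  | symm x y _ ih => exact ClosedWalk.exists_shift_iterate_eq_symm ih
  | trans x y z _ _ ih₁ ih₂ =>
    obtain ⟨m, hm⟩ := ih₁
    obtain ⟨n, hn⟩ := ih₂
    exact ⟨n + m, by rw [Function.iterate_add_apply, hm, hn]⟩

end ClosedEulerian

theorem EulerTours.mk_eq_mk_of_shift_iterate_eq {x y : ClosedEulerian H} {n : ℕ}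
    (h : ClosedWalk.shift^[n] x.toClosedWalk = y.toClosedWalk) :
    Quot.mk (EulerTourRel H) x = Quot.mk _ y := by
  induction n generalizing x with
  | zero => rw [ClosedEulerian.toClosedWalk_injective h]
  | succ n ih =>
    obtain ⟨x', hxx', hx'⟩ := x.exists_eulerTourRel_shift
    rw [Function.iterate_succ_apply, ← hx'] at h
    exact (Quot.sound hxx').trans (ih h)

theorem EulerTours.mk_eq_mk_iff {x y : ClosedEulerian H} :
    Quot.mk (EulerTourRel H) x = Quot.mk _ y ↔
      ∃ n, ClosedWalk.shift^[n] x.toClosedWalk = y.toClosedWalk :=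
  ⟨fun h => ClosedEulerian.exists_shift_iterate_eq_of_eqvGen (Quot.eqvGen_exact h),
    fun ⟨_, h⟩ => mk_eq_mk_of_shift_iterate_eq h⟩

end SimpleGraph

namespace Sym2

variable {V : Type} [LinearOrder V]

def endpoint (e : Sym2 V) (b : Bool) : V := bif b then e.emax else e.emin

@[simp] theorem endpoint_mk_decide (a c : V) : s(a, c).endpoint (decide (c < a)) = a := by
  by_cases h : c < a <;> simp [endpoint, emin, emax, h, le_of_lt, not_lt.1]

@[simp] theorem endpoint_mk_not_decide (a c : V) : s(a, c).endpoint (!decide (c < a)) = c := by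
  by_cases h : c < a <;> simp [endpoint, emin, emax, h, le_of_lt, not_lt.1]

theorem mk_endpoint_endpoint (e : Sym2 V) (b : Bool) : s(e.endpoint b, e.endpoint !b) = e := by
  induction e with
  | _ a c => rcases le_total a c with h | h <;> cases b <;> simp [endpoint, emin, emax, h, eq_swap]

theorem decide_endpoint_lt {e : Sym2 V} {b : Bool} (h : e.endpoint b ≠ e.endpoint !b) :
    decide (e.endpoint (!b) < e.endpoint b) = b := by
  induction e with
  | _ a c =>
    rcases lt_trichotomy a c with h' | rfl | h' <;> cases b <;>
      simp_all [endpoint, emin, emax, le_of_lt]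

end Sym2

namespace SimpleGraph

variable {V : Type} [LinearOrder V] {G : SimpleGraph V}

theorem subdiv2_adj_inl_inr {u : V} {e : G.edgeSet} {b : Bool} :
    (subdiv2 G).Adj (.inl u) (.inr (e, b)) ↔ u = (e : Sym2 V).endpoint b := by
  cases b <;> simp [subdiv2, subdivRel, Sym2.endpoint, fromRel_adj]

theorem subdiv2_adj_inr_inr {e e' : G.edgeSet} {b b' : Bool} :
    (subdiv2 G).Adj (.inr (e, b)) (.inr (e', b')) ↔ e = e' ∧ b' = !b := by
  cases b <;> cases b' <;> simp [subdiv2, subdivRel, fromRel_adj, Subtype.ext_iff, eq_comm]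

theorem subdiv2_not_adj_inl_inl {u v : V} : ¬ (subdiv2 G).Adj (.inl u) (.inl v) := by
  simp [subdiv2, subdivRel, fromRel_adj]

theorem subdiv2_adj_inr_iff {e : G.edgeSet} {b : Bool} {z : V ⊕ (G.edgeSet × Bool)} :
    (subdiv2 G).Adj (.inr (e, b)) z ↔
      z = .inr (e, !b) ∨ z = .inl ((e : Sym2 V).endpoint b) := by
  rcases z with u | ⟨e', b'⟩
  · simp [(subdiv2 G).adj_comm, subdiv2_adj_inl_inr]
  · simp [subdiv2_adj_inr_inr, eq_comm]

theorem subdiv2_adj_inl_iff {u : V} {z : V ⊕ (G.edgeSet × Bool)} :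
    (subdiv2 G).Adj (.inl u) z ↔
      ∃ c, ∃ h : G.Adj u c, z = .inr (⟨s(u, c), h⟩, decide (c < u)) := by
  rcases z with v | ⟨e, b⟩
  · simp [subdiv2_not_adj_inl_inl]
  rw [subdiv2_adj_inl_inr]
  constructor
  · rintro rfl
    have he := Sym2.mk_endpoint_endpoint (e : Sym2 V) b
    have hA : G.Adj ((e : Sym2 V).endpoint b) ((e : Sym2 V).endpoint !b) := by
      rw [← mem_edgeSet, he]
      exact e.2
    exact ⟨_, hA, by simp [he, Sym2.decide_endpoint_lt hA.ne]⟩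
  · rintro ⟨c, h, hz⟩
    obtain ⟨rfl, rfl⟩ := Prod.mk.inj (Sum.inr_injective hz)
    simp

-- `(e, false)` hangs at the smaller endpoint of `e`, so the new vertex of `s(a, c)` next to `a`
-- is `(s(a, c), decide (c < a))`.
theorem subdiv2_adj_near {a c : V} (h : G.Adj a c) :
    (subdiv2 G).Adj (.inl a) (.inr (⟨s(a, c), h⟩, decide (c < a))) :=
  subdiv2_adj_inl_iff.2 ⟨c, h, rfl⟩

theorem subdiv2_adj_far {a c : V} (h : G.Adj a c) :
    (subdiv2 G).Adj (.inr (⟨s(a, c), h⟩, !decide (c < a))) (.inl c) :=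
  subdiv2_adj_inr_iff.2 (.inr (congrArg Sum.inl (Sym2.endpoint_mk_not_decide a c).symm))

/-- The three edges of `subdiv2 G` lying over an edge `e` of `G`: `some b` is the edge joining
the new vertex `(e, b)` to `e`, and `none` is the edge between the two new vertices. -/
def subdiv2Edge (e : G.edgeSet) : Option Bool → Sym2 (V ⊕ (G.edgeSet × Bool))
  | some b => s(.inl ((e : Sym2 V).endpoint b), .inr (e, b))
  | none => s(.inr (e, false), .inr (e, true))

theorem subdiv2Edge_inj {e e' : G.edgeSet} {k k' : Option Bool} :
    subdiv2Edge e k = subdiv2Edge e' k' ↔ e = e' ∧ k = k' := by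
  constructor
  · cases k <;> cases k' <;> simp +contextual [subdiv2Edge]
  · rintro ⟨rfl, rfl⟩
    rfl

theorem mem_edgeSet_subdiv2 {f : Sym2 (V ⊕ (G.edgeSet × Bool))} :
    f ∈ (subdiv2 G).edgeSet ↔ ∃ e k, subdiv2Edge e k = f := by
  constructor
  · induction f with
    | _ x y =>
      rcases x with u | ⟨e, b⟩ <;> rcases y with v | ⟨e', b'⟩ <;>
        intro (h : (subdiv2 G).Adj _ _)
      · exact absurd h subdiv2_not_adj_inl_inl
      · obtain rfl := subdiv2_adj_inl_inr.1 h
        exact ⟨e', some b', rfl⟩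
      · obtain rfl := subdiv2_adj_inl_inr.1 h.symm
        exact ⟨e, some b, Sym2.eq_swap⟩
      · obtain ⟨rfl, rfl⟩ := subdiv2_adj_inr_inr.1 h
        cases b
        · exact ⟨e, none, rfl⟩
        · exact ⟨e, none, Sym2.eq_swap⟩
  · rintro ⟨e, k | b, rfl⟩
    · exact subdiv2_adj_inr_inr.2 ⟨rfl, rfl⟩
    · exact subdiv2_adj_inl_inr.2 rfl

def Walk.subdivide {u v : V} : G.Walk u v → (subdiv2 G).Walk (.inl u) (.inl v)
  | .nil => .nil
  | .cons h p =>
    .cons (subdiv2_adj_near h) (.cons (subdiv2_adj_inr_inr.2 ⟨rfl, rfl⟩)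
      (.cons (subdiv2_adj_far h) p.subdivide))

namespace Walk

variable {u v w : V}

theorem subdivide_append (p : G.Walk u v) (q : G.Walk v w) :
    (p.append q).subdivide = p.subdivide.append q.subdivide := by
  induction p with
  | nil => rfl
  | cons h p ih => simp [Walk.subdivide, ih]

theorem edges_subdivide_cons {a c : V} (h : G.Adj a c) (p : G.Walk c v) :
    (cons h p).subdivide.edges =
      subdiv2Edge ⟨s(a, c), h⟩ (some (decide (c < a))) :: subdiv2Edge ⟨s(a, c), h⟩ none ::
        subdiv2Edge ⟨s(a, c), h⟩ (some !decide (c < a)) :: p.subdivide.edges := by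
  simp only [Walk.subdivide, edges_cons, subdiv2Edge, Sym2.endpoint_mk_decide,
    Sym2.endpoint_mk_not_decide, List.cons.injEq, true_and, and_true]
  refine ⟨?_, Sym2.eq_swap⟩
  cases decide (c < a)
  · rfl
  · exact Sym2.eq_swap

theorem count_subdiv2Edge_edges_subdivide (p : G.Walk u v) (e : G.edgeSet) (k : Option Bool) :
    p.subdivide.edges.count (subdiv2Edge e k) = p.edges.count (e : Sym2 V) := by
  induction p with
  | nil => rfl
  | @cons a c _ h p ih =>
    rw [edges_subdivide_cons, edges_cons, List.count_cons, List.count_cons, List.count_cons,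
      List.count_cons, ih]
    by_cases he : (⟨s(a, c), h⟩ : G.edgeSet) = e
    · subst he
      cases k with
      | none => simp [subdiv2Edge_inj]
      | some b => cases b <;> cases decide (c < a) <;> simp [subdiv2Edge_inj]
    · have he' : s(a, c) ≠ (e : Sym2 V) := fun h' => he (Subtype.ext h')
      simp [subdiv2Edge_inj, he, he']

theorem subdiv2Edge_mem_edges_subdivide {p : G.Walk u v} {e : G.edgeSet} {k : Option Bool} :
    subdiv2Edge e k ∈ p.subdivide.edges ↔ (e : Sym2 V) ∈ p.edges := by
  rw [← List.count_pos_iff, ← List.count_pos_iff, count_subdiv2Edge_edges_subdivide]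

theorem isTrail_subdivide_iff {p : G.Walk u v} : p.subdivide.IsTrail ↔ p.IsTrail := by
  simp only [isTrail_def, List.nodup_iff_count_le_one]
  constructor
  · intro h e
    by_cases he : e ∈ G.edgeSet
    · simpa [count_subdiv2Edge_edges_subdivide] using h (subdiv2Edge ⟨e, he⟩ none)
    · simp [List.count_eq_zero.2 fun h' => he (p.edges_subset_edgeSet h')]
  · intro h f
    by_cases hf : f ∈ p.subdivide.edges
    · obtain ⟨e, k, rfl⟩ := mem_edgeSet_subdiv2.1 (p.subdivide.edges_subset_edgeSet hf)
      simpa [count_subdiv2Edge_edges_subdivide] using h e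
    · simp [List.count_eq_zero.2 hf]

theorem filterMap_getLeft_support_subdivide (p : G.Walk u v) :
    p.subdivide.support.filterMap Sum.getLeft? = p.support := by
  induction p with
  | nil => rfl
  | cons h p ih => simp [Walk.subdivide, List.filterMap_cons, ih]

theorem subdivide_injective : Function.Injective (subdivide : G.Walk u v → _) := fun p q h =>
  ext_support <| by
    rw [← filterMap_getLeft_support_subdivide p, h, filterMap_getLeft_support_subdivide]

theorem exists_subdivide_eq_of_isTrail (q : (subdiv2 G).Walk (.inl u) (.inl w))
    (hq : q.IsTrail) : ∃ p : G.Walk u w, p.subdivide = q := by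
  induction hn : q.length using Nat.strong_induction_on generalizing u q with
  | _ n ih =>
    cases q with
    | nil => exact ⟨.nil, rfl⟩
    | cons h₁ q₁ =>
      obtain ⟨c, hA, rfl⟩ := subdiv2_adj_inl_iff.1 h₁
      cases q₁ with
      | cons h₂ q₂ =>
        rcases subdiv2_adj_inr_iff.1 h₂ with rfl | hback
        · cases q₂ with
          | cons h₃ q₃ =>
            rcases subdiv2_adj_inr_iff.1 h₃ with hback | hc
            · rw [Bool.not_not] at hback
              subst hback
              exact absurd rfl hq.of_cons.ne_of_cons_cons
            · rw [Sym2.endpoint_mk_not_decide] at hc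
              subst hc
              obtain ⟨p, hp⟩ := ih q₃.length (by simp only [← hn, length_cons]; omega) q₃
                hq.of_cons.of_cons.of_cons rfl
              exact ⟨.cons hA p, by rw [Walk.subdivide, hp]⟩
        · rw [Sym2.endpoint_mk_decide] at hback
          subst hback
          exact absurd rfl hq.ne_of_cons_cons

end Walk

theorem exists_inl_mem_support_of_forall_mem_edges {z : V ⊕ (G.edgeSet × Bool)}
    (q : (subdiv2 G).Walk z z) (hcover : ∀ f ∈ (subdiv2 G).edgeSet, f ∈ q.edges) :
    ∃ u, .inl u ∈ q.support := by
  rcases z with u | ⟨e, b⟩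
  · exact ⟨u, q.start_mem_support⟩
  · exact ⟨_, q.fst_mem_support_of_mem_edges
      (hcover _ (mem_edgeSet_subdiv2.2 ⟨e, some b, rfl⟩))⟩

namespace ClosedWalk

def subdivide (x : ClosedWalk G) : ClosedWalk (subdiv2 G) := ⟨.inl x.1, x.2.subdivide⟩

theorem subdivide_injective :
    Function.Injective (subdivide : ClosedWalk G → ClosedWalk (subdiv2 G)) := by
  rintro ⟨u, p⟩ ⟨v, q⟩ h
  simp only [subdivide, Sigma.mk.inj_iff, Sum.inl.injEq] at h
  obtain ⟨rfl, h⟩ := h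
  rw [Walk.subdivide_injective (eq_of_heq h)]

theorem semiconj_subdivide_shift : Function.Semiconj (subdivide (G := G)) shift (shift^[3]) := by
  rintro ⟨a, p⟩
  cases p with
  | nil => rfl
  | cons h p =>
    change (⟨_, (p.concat h).subdivide⟩ : ClosedWalk _) =
      shift^[(Walk.cons h .nil).subdivide.length] ⟨_, ((Walk.cons h .nil).append p).subdivide⟩
    rw [Walk.subdivide_append, shift_iterate_append, Walk.concat_eq_append, Walk.subdivide_append]

theorem exists_shift_iterate_eq_of_shift_iterate_subdivide_eq :
    ∀ (m : ℕ) {x y : ClosedWalk G},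
      shift^[m] x.subdivide = y.subdivide → ∃ n, shift^[n] x = y
  | 0, _, _, h => ⟨0, subdivide_injective h⟩
  | 1, ⟨_, .nil⟩, _, h | 2, ⟨_, .nil⟩, _, h => ⟨0, subdivide_injective h⟩
  -- one or two steps into a subdivided edge, the walk sits at a new vertex
  | 1, ⟨_, .cons _ _⟩, _, h | 2, ⟨_, .cons _ _⟩, _, h =>
    absurd (congrArg (·.1.isLeft) h) (by simp [subdivide, shift, Walk.subdivide])
  | m + 3, x, y, h => by
    rw [Function.iterate_add_apply, ← semiconj_subdivide_shift] at h
    obtain ⟨n, hn⟩ := exists_shift_iterate_eq_of_shift_iterate_subdivide_eq m h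
    exact ⟨n + 1, by rwa [Function.iterate_succ_apply]⟩

end ClosedWalk

namespace ClosedEulerian

def subdivide (x : ClosedEulerian G) : ClosedEulerian (subdiv2 G) :=
  mk' x.2.1.subdivide (Walk.isTrail_subdivide_iff.2 x.isTrail) fun f hf => by
    obtain ⟨e, k, rfl⟩ := mem_edgeSet_subdiv2.1 hf
    exact Walk.subdiv2Edge_mem_edges_subdivide.2 (x.mem_edges e.2)

theorem toClosedWalk_subdivide (x : ClosedEulerian G) :
    x.subdivide.toClosedWalk = x.toClosedWalk.subdivide := rfl

end ClosedEulerian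

noncomputable def EulerTours.subdivide : EulerTours G → EulerTours (subdiv2 G) :=
  Quot.lift (fun x : ClosedEulerian G => Quot.mk _ x.subdivide) fun x y hxy => by
    obtain ⟨n, hn⟩ := EulerTours.mk_eq_mk_iff.1 (Quot.sound hxy)
    refine EulerTours.mk_eq_mk_iff.2 ⟨3 * n, ?_⟩
    rw [ClosedEulerian.toClosedWalk_subdivide, ClosedEulerian.toClosedWalk_subdivide,
      Function.iterate_mul, ← (ClosedWalk.semiconj_subdivide_shift.iterate_right n).eq, hn]

theorem EulerTours.subdivide_injective : Function.Injective (EulerTours.subdivide (G := G)) := by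
  rintro ⟨x⟩ ⟨y⟩ h
  obtain ⟨n, hn⟩ := EulerTours.mk_eq_mk_iff.1 h
  exact EulerTours.mk_eq_mk_iff.2
    (ClosedWalk.exists_shift_iterate_eq_of_shift_iterate_subdivide_eq n hn)

theorem EulerTours.subdivide_surjective :
    Function.Surjective (EulerTours.subdivide (G := G)) := by
  refine Quot.ind fun (y : ClosedEulerian (subdiv2 G)) => ?_
  obtain ⟨u, hu⟩ := exists_inl_mem_support_of_forall_mem_edges y.2.1 fun _ => y.mem_edges
  obtain ⟨q, hq, hyq⟩ := y.exists_eulerTourRel_fst_eq hu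
  obtain ⟨p, rfl⟩ :=
    Walk.exists_subdivide_eq_of_isTrail q (ClosedEulerian.isTrail ⟨_, q, hq⟩)
  have hp := Walk.isTrail_subdivide_iff.1 (ClosedEulerian.isTrail ⟨_, _, hq⟩)
  have hcover : ∀ e ∈ G.edgeSet, e ∈ p.edges := fun e he =>
    Walk.subdiv2Edge_mem_edges_subdivide.1 <| ClosedEulerian.mem_edges ⟨_, _, hq⟩
      (mem_edgeSet_subdiv2.2 ⟨⟨e, he⟩, none, rfl⟩)
  exact ⟨Quot.mk _ (ClosedEulerian.mk' p hp hcover), (Quot.sound hyq).symm⟩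

end SimpleGraph

/-- the Euler tours of `G` are in bijection with the Euler tours of
the graph `G'` obtained from `G` by replacing every edge by a path of length three. -/
theorem eulerTours_equiv_subdiv2 {V : Type} [LinearOrder V] (G : SimpleGraph V) :
    Nonempty (EulerTours G ≃ EulerTours (subdiv2 G)) :=
  ⟨.ofBijective SimpleGraph.EulerTours.subdivide
    ⟨SimpleGraph.EulerTours.subdivide_injective, SimpleGraph.EulerTours.subdivide_surjective⟩⟩
end

section
/- Let G' be obtained from G by subdividing every edge twice (replacing each edge by a path of length three). If v_{e_{i-1}}, v_{e_i}, v_{e_{i+1}} are three successive vertices on a Hamiltonian cycle of the line graph L(G'), then the edges e_{i-1}, e_i, e_{i+1} of G' cannot all be incident to a common vertex u belonging to the original vertex set V(G). -/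
open SimpleGraph

lemma SimpleGraph.exists_adj_of_mem_edge {V : Type*} {G : SimpleGraph V} {d : G.edgeSet} {z : V}
    (h : z ∈ (d : Sym2 V)) : ∃ w, G.Adj z w ∧ (d : Sym2 V) = s(z, w) := by
  obtain ⟨w, hw⟩ := Sym2.mem_iff_exists.mp h
  exact ⟨w, G.mem_edgeSet.mp (hw ▸ d.2), hw⟩

namespace SimpleGraph.Walk.IsCycle

variable {V : Type*} {G : SimpleGraph V} {u : V} {c : G.Walk u u}

theorem neighborSet_toSubgraph_eq_of_infix (hc : c.IsCycle) {a b d : V}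
    (h : [a, b, d] <:+: c.support) : c.toSubgraph.neighborSet b = {a, d} := by
  obtain ⟨s, t, hst⟩ := h
  have hlen : s.length + 1 < c.length := by
    have := congrArg List.length hst
    simp only [List.length_append, List.length_cons, List.length_nil, c.length_support] at this
    omega
  have hvert (j : ℕ) (hj : j < 3) : some (c.getVert (s.length + j)) = [a, b, d][j]? := by
    rw [c.getVert_eq_support_getElem? (by omega), ← hst, List.append_assoc,
      List.getElem?_append_right (by omega), Nat.add_sub_cancel_left,
      List.getElem?_append_left (by simpa using hj)]
  obtain ⟨ha, hb, hd⟩ : c.getVert s.length = a ∧ c.getVert (s.length + 1) = b ∧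
      c.getVert (s.length + 2) = d := by
    simpa using And.intro (hvert 0 (by omega)) (And.intro (hvert 1 (by omega)) (hvert 2 (by omega)))
  rw [← hb, hc.neighborSet_toSubgraph_internal (by omega) hlen, Nat.add_sub_cancel, ha, ← hd]

theorem neighborSet_toSubgraph_eq_of_subset_pair (hc : c.IsCycle) {v a b : V}
    (hv : v ∈ c.support) (h : G.neighborSet v ⊆ {a, b}) :
    c.toSubgraph.neighborSet v = {a, b} := by
  refine Set.eq_of_subset_of_ncard_le ((c.toSubgraph.neighborSet_subset v).trans h) ?_
  rw [hc.ncard_neighborSet_toSubgraph_eq_two hv]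
  exact (Set.ncard_insert_le a {b}).trans (by simp)

end SimpleGraph.Walk.IsCycle

namespace subdiv2

variable {V : Type} [LinearOrder V] {G : SimpleGraph V}

lemma adj_inl {u : V} {w : V ⊕ (G.edgeSet × Bool)} (h : (subdiv2 G).Adj (.inl u) w) :
    ∃ e : G.edgeSet, (w = .inr (e, false) ∧ u = Sym2.emin (e : Sym2 V)) ∨
      (w = .inr (e, true) ∧ u = Sym2.emax (e : Sym2 V)) := by
  rcases w with v | ⟨e, _ | _⟩ <;> simp [subdiv2, subdivRel] at h ⊢ <;> grind

lemma adj_inr_false {e : G.edgeSet} {w : V ⊕ (G.edgeSet × Bool)}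
    (h : (subdiv2 G).Adj (.inr (e, false)) w) :
    w = .inl (Sym2.emin (e : Sym2 V)) ∨ w = .inr (e, true) := by
  rcases w with v | ⟨e', _ | _⟩ <;> simp [subdiv2, subdivRel] at h ⊢ <;> grind

lemma adj_inr_true {e : G.edgeSet} {w : V ⊕ (G.edgeSet × Bool)}
    (h : (subdiv2 G).Adj (.inr (e, true)) w) :
    w = .inr (e, false) ∨ w = .inl (Sym2.emax (e : Sym2 V)) := by
  rcases w with v | ⟨e', _ | _⟩ <;> simp [subdiv2, subdivRel] at h ⊢ <;> grind

variable (e : G.edgeSet)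

def lowEdge : (subdiv2 G).edgeSet :=
  ⟨s(.inl (Sym2.emin (e : Sym2 V)), .inr (e, false)), by simp [subdiv2, subdivRel]⟩

def midEdge : (subdiv2 G).edgeSet :=
  ⟨s(.inr (e, false), .inr (e, true)), by simp [subdiv2, subdivRel]⟩

def highEdge : (subdiv2 G).edgeSet :=
  ⟨s(.inr (e, true), .inl (Sym2.emax (e : Sym2 V))), by simp [subdiv2, subdivRel]⟩

variable {e}

lemma inl_notMem_midEdge (u : V) : .inl u ∉ (midEdge e : Sym2 (V ⊕ (G.edgeSet × Bool))) := by
  simp [midEdge]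

lemma exists_eq_lowEdge_or_eq_highEdge_of_inl_mem {u : V} {d : (subdiv2 G).edgeSet}
    (h : Sum.inl u ∈ (d : Sym2 (V ⊕ (G.edgeSet × Bool)))) :
    ∃ e, d = lowEdge e ∨ d = highEdge e := by
  obtain ⟨w, hadj, hw⟩ := exists_adj_of_mem_edge h
  obtain ⟨e, ⟨rfl, rfl⟩ | ⟨rfl, rfl⟩⟩ := adj_inl hadj
  · exact ⟨e, .inl (Subtype.ext hw)⟩
  · exact ⟨e, .inr (Subtype.ext (hw.trans Sym2.eq_swap))⟩

lemma eq_lowEdge_or_eq_midEdge_of_mem {d : (subdiv2 G).edgeSet}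
    (h : Sum.inr (e, false) ∈ (d : Sym2 (V ⊕ (G.edgeSet × Bool)))) :
    d = lowEdge e ∨ d = midEdge e := by
  obtain ⟨w, hadj, hw⟩ := exists_adj_of_mem_edge h
  rcases adj_inr_false hadj with rfl | rfl
  · exact .inl (Subtype.ext (hw.trans Sym2.eq_swap))
  · exact .inr (Subtype.ext hw)

lemma eq_midEdge_or_eq_highEdge_of_mem {d : (subdiv2 G).edgeSet}
    (h : Sum.inr (e, true) ∈ (d : Sym2 (V ⊕ (G.edgeSet × Bool)))) :
    d = midEdge e ∨ d = highEdge e := by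
  obtain ⟨w, hadj, hw⟩ := exists_adj_of_mem_edge h
  rcases adj_inr_true hadj with rfl | rfl
  · exact .inl (Subtype.ext (hw.trans Sym2.eq_swap))
  · exact .inr (Subtype.ext hw)

lemma lineGraph_neighborSet_midEdge_subset :
    (subdiv2 G).lineGraph.neighborSet (midEdge e) ⊆ {lowEdge e, highEdge e} := by
  intro d hd
  obtain ⟨hne, z, hz, hzd⟩ := lineGraph_adj_iff_exists.mp hd
  simp only [midEdge, Sym2.mem_iff] at hz
  rcases hz with rfl | rfl
  · exact .inl ((eq_lowEdge_or_eq_midEdge_of_mem hzd).resolve_right hne.symm)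
  · exact .inr ((eq_midEdge_or_eq_highEdge_of_mem hzd).resolve_left hne.symm)

end subdiv2

open Classical in
/-- if `v_{e₁}, v_{e₂}, v_{e₃}` are three successive vertices on a
Hamiltonian cycle of the line graph of the twice-subdivided graph `G'`, then the
corresponding edges `e₁, e₂, e₃` of `G'` cannot all be incident to a common vertex
`u` belonging to the original vertex set `V(G)`. -/
theorem successive_hamCycle_vertices_not_common_original_vertex
    {V : Type} [LinearOrder V] (G : SimpleGraph V)
    {x : (subdiv2 G).edgeSet} (c : (subdiv2 G).lineGraph.Walk x x)
    (hc : c.IsHamiltonianCycle)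
    (l₁ l₂ : List (subdiv2 G).edgeSet) (e₁ e₂ e₃ : (subdiv2 G).edgeSet)
    (hsup : c.support = l₁ ++ e₁ :: e₂ :: e₃ :: l₂) :
    ¬ ∃ u : V, (Sum.inl u ∈ (e₁ : Sym2 (V ⊕ (G.edgeSet × Bool)))) ∧
        (Sum.inl u ∈ (e₂ : Sym2 (V ⊕ (G.edgeSet × Bool)))) ∧
        (Sum.inl u ∈ (e₃ : Sym2 (V ⊕ (G.edgeSet × Bool)))) := by
  rintro ⟨u, h₁, h₂, h₃⟩
  obtain ⟨e, he₂⟩ := subdiv2.exists_eq_lowEdge_or_eq_highEdge_of_inl_mem h₂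
  have hmid : c.toSubgraph.neighborSet (subdiv2.midEdge e) =
      {subdiv2.lowEdge e, subdiv2.highEdge e} :=
    hc.isCycle.neighborSet_toSubgraph_eq_of_subset_pair (hc.mem_support _)
      subdiv2.lineGraph_neighborSet_midEdge_subset
  have hadj : c.toSubgraph.Adj e₂ (subdiv2.midEdge e) := by
    refine Subgraph.Adj.symm (show e₂ ∈ c.toSubgraph.neighborSet _ from ?_)
    rw [hmid]
    rcases he₂ with rfl | rfl <;> simp
  have hinfix : [e₁, e₂, e₃] <:+: c.support := ⟨l₁, l₂, by simp [hsup]⟩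
  rcases (hc.isCycle.neighborSet_toSubgraph_eq_of_infix hinfix).subset hadj with h | h
  · exact subdiv2.inl_notMem_midEdge u (h ▸ h₁)
  · exact subdiv2.inl_notMem_midEdge u (h ▸ h₃)
end

section
/- A finite ordering o = (v_1,...,v_n) of the vertices of a graph G is a perfect elimination ordering iff for all i, the set of later neighbors N^+(G,o,i) = { v_j : (v_i,v_j) ∈ E, j > i } induces a clique; if o is a perfect elimination ordering, then the relation pairing each v_i (i < n) with the smallest-index later neighbor v_j (if one exists) defines a forest on V, and defines a tree when G is connected. -/
open SimpleGraph

/-- The ordering `0 < 1 < ⋯ < n-1` of the vertices of `G : SimpleGraph (Fin n)` is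
a perfect elimination ordering: for each `i` the later neighbours
`N⁺(G,o,i) = {j : G.Adj i j, i < j}` induce a clique. -/
def IsPEO {n : ℕ} (G : SimpleGraph (Fin n)) : Prop :=
  ∀ i j j' : Fin n, i < j → i < j' → j ≠ j' → G.Adj i j → G.Adj i j' → G.Adj j j'

/-- The elimination relation: `i` is paired with its smallest-index later
neighbour `j`. -/
def ElimRel {n : ℕ} (G : SimpleGraph (Fin n)) (i j : Fin n) : Prop :=
  G.Adj i j ∧ i < j ∧ ∀ j' : Fin n, i < j' → j' < j → ¬ G.Adj i j'

/-! Every vertex has at most one larger neighbour in the elimination graph, so the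
least vertex of a cycle would have two: the graph is a forest. If `x < y` are adjacent in `G`
and `p` is the elimination parent of `x`, then either `p = y` or, by the clique condition on the
later neighbours of `x`, `p < y` are adjacent in `G`; climbing from `x` to `p` therefore reaches
`y`, so every edge of `G` joins vertices of one elimination component. -/

namespace SimpleGraph

variable {V : Type*}

theorem isAcyclic_of_subsingleton_upperAdj [LinearOrder V] {H : SimpleGraph V}
    (h : ∀ v, {w | H.Adj v w ∧ v < w}.Subsingleton) : H.IsAcyclic := by
  intro v c hc
  obtain ⟨m, hm, hmin⟩ := c.support.toFinset.exists_min_image id ⟨v, by simp⟩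
  rw [List.mem_toFinset] at hm
  set c' := c.rotate m hm
  have hc' : c'.IsCycle := hc.rotate hm
  have hlt : ∀ i, H.Adj m (c'.getVert i) → m < c'.getVert i := fun i hadj =>
    lt_of_le_of_ne (hmin _ <| List.mem_toFinset.mpr <|
      (c.mem_support_rotate_iff m hm).mp (c'.getVert_mem_support i)) hadj.ne
  exact hc'.snd_ne_penultimate <| h m ⟨c'.adj_snd hc'.not_nil, hlt 1 (c'.adj_snd hc'.not_nil)⟩
    ⟨(c'.adj_penultimate hc'.not_nil).symm, hlt _ (c'.adj_penultimate hc'.not_nil).symm⟩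

theorem Connected.of_adj_le_reachable {G H : SimpleGraph V} (hG : G.Connected)
    (h : G.Adj ≤ H.Reachable) : H.Connected := by
  have hle : G.Reachable ≤ H.Reachable := by
    rw [reachable_eq_reflTransGen, reachable_eq_reflTransGen]
    exact Relation.reflTransGen_closed (H.reachable_eq_reflTransGen ▸ h)
  have := hG.nonempty
  exact ⟨fun u v => hle u v (hG u v)⟩

end SimpleGraph

abbrev elimGraph {n : ℕ} (G : SimpleGraph (Fin n)) : SimpleGraph (Fin n) := fromRel (ElimRel G)

section Elimination

variable {n : ℕ} {G : SimpleGraph (Fin n)}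

theorem ElimRel.unique {x y z : Fin n} (hy : ElimRel G x y) (hz : ElimRel G x z) : y = z := by
  by_contra hne
  rcases lt_or_gt_of_ne hne with hlt | hlt
  · exact hz.2.2 y hy.2.1 hlt hy.1
  · exact hy.2.2 z hz.2.1 hlt hz.1

theorem elimGraph_adj_of_lt {x y : Fin n} (hxy : x < y) :
    (elimGraph G).Adj x y ↔ ElimRel G x y := by
  rw [fromRel_adj, and_iff_right hxy.ne]
  exact or_iff_left fun h => h.2.1.not_gt hxy

theorem isAcyclic_elimGraph : (elimGraph G).IsAcyclic :=
  isAcyclic_of_subsingleton_upperAdj fun _ _ ⟨hy, hxy⟩ _ ⟨hz, hxz⟩ =>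
    ((elimGraph_adj_of_lt hxy).mp hy).unique ((elimGraph_adj_of_lt hxz).mp hz)

theorem exists_elimRel_le {x y : Fin n} (hadj : G.Adj x y) (hxy : x < y) :
    ∃ p, ElimRel G x p ∧ p ≤ y := by
  obtain ⟨p, ⟨hxp, hp⟩, hmin⟩ :=
    wellFounded_lt.has_min {j | x < j ∧ G.Adj x j} ⟨y, hxy, hadj⟩
  exact ⟨p, ⟨hp, hxp, fun j hxj hjp hj => hmin j ⟨hxj, hj⟩ hjp⟩, not_lt.mp (hmin y ⟨hxy, hadj⟩)⟩

theorem IsPEO.elimGraph_reachable_of_adj (hPEO : IsPEO G) {x y : Fin n} (hadj : G.Adj x y) :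
    (elimGraph G).Reachable x y := by
  wlog hxy : x < y generalizing x y
  · exact (this hadj.symm ((lt_or_gt_of_ne hadj.ne).resolve_left hxy)).symm
  induction x using WellFoundedGT.induction generalizing y with
  | _ x ih =>
  obtain ⟨p, hp, hpy⟩ := exists_elimRel_le hadj hxy
  have hxp : (elimGraph G).Reachable x p := ((elimGraph_adj_of_lt hp.2.1).mpr hp).reachable
  rcases hpy.lt_or_eq with hpy | rfl
  · exact hxp.trans (ih p hp.2.1 (hPEO x p y hp.2.1 hxy hpy.ne hp.1 hadj) hpy)
  · exact hxp

theorem IsPEO.connected_elimGraph (hPEO : IsPEO G) (hG : G.Connected) :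
    (elimGraph G).Connected :=
  hG.of_adj_le_reachable fun _ _ => hPEO.elimGraph_reachable_of_adj

end Elimination

/-- if the ordering is a perfect elimination ordering, then the graph
pairing each vertex with its smallest-index later neighbour is a forest, and is a
tree when `G` is connected (the elimination tree). -/
theorem elimRel_forest_of_isPEO {n : ℕ} (G : SimpleGraph (Fin n)) (h : IsPEO G) :
    (SimpleGraph.fromRel (ElimRel G)).IsAcyclic ∧
      (G.Connected → (SimpleGraph.fromRel (ElimRel G)).IsTree) :=
  ⟨isAcyclic_elimGraph, fun hG => ⟨h.connected_elimGraph hG, isAcyclic_elimGraph⟩⟩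
end

section
/- A graph is chordal if and only if it admits a perfect elimination ordering. -/
open SimpleGraph

/-- A graph is chordal if every cycle of length at least `4` has a chord: an edge
between two vertices of the cycle that is not an edge of the cycle. -/
def Chordal {V : Type} (G : SimpleGraph V) : Prop :=
  ∀ (u : V) (c : G.Walk u u), c.IsCycle → 4 ≤ c.length →
    ∃ a b : V, a ∈ c.support ∧ b ∈ c.support ∧ G.Adj a b ∧ s(a, b) ∉ c.edges

/-!
If `r` is a perfect elimination order, the two cycle neighbours of the `r`-first vertex of a cycle
are later neighbours of it, hence adjacent, and on a cycle of length at least `4` this edge is a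
chord.

Conversely, it suffices to find a simplicial vertex in every nonempty finite chordal graph, and by
induction on the number of vertices we prove the stronger form of Dirac's lemma: every clique
`S ≠ V` misses some simplicial vertex. If `G` is not complete, pick nonadjacent `a`, `b`, let `C`
be the component of `b` in `G - N[a]` and `B` its outer boundary. Then `B ⊆ N(a)` is a clique:
two nonadjacent vertices of `B` are joined by shortest paths through `a` and through `C`, which
close up to a chordless cycle of length at least `4`. Induction on `G[C ∪ B]` and on `G - C` gives
simplicial vertices in `C` and outside `C ∪ B`; they are nonadjacent, so not both lie in `S`.
-/

namespace SimpleGraph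

variable {V : Type*} {G : SimpleGraph V}

def IsPerfectEliminationOrder (G : SimpleGraph V) (r : V → ℕ) : Prop :=
  ∀ u, G.IsClique {v | G.Adj u v ∧ r u < r v}

theorem IsPerfectEliminationOrder.of_lt_imp_lt {r r' : V → ℕ}
    (h : G.IsPerfectEliminationOrder r') (hrr' : ∀ u v, r u < r v → r' u < r' v) :
    G.IsPerfectEliminationOrder r :=
  fun u => (h u).subset fun _ => And.imp_right (hrr' _ _)

theorem isPerfectEliminationOrder_of_induce {v : V} {r : V → ℕ}
    (hv : G.IsClique (G.neighborSet v)) (hmin : ∀ u, r v ≤ r u)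
    (hr : (G.induce {u | u ≠ v}).IsPerfectEliminationOrder fun u => r u) :
    G.IsPerfectEliminationOrder r := by
  intro u
  by_cases huv : u = v
  · subst huv
    exact hv.subset fun _ hw => hw.1
  intro x hx y hy hxy
  have hne : ∀ w, r u < r w → w ≠ v := fun w hw hwv => (hmin u).not_gt (hwv ▸ hw)
  exact hr ⟨u, huv⟩ (x := ⟨x, hne x hx.2⟩) hx (y := ⟨y, hne y hy.2⟩) hy
    (Subtype.coe_ne_coe.mp hxy)

namespace Walk

variable {u v : V}

theorem IsCycle.snd_penultimate_notMem_edges {c : G.Walk u u} (hc : c.IsCycle)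
    (hlen : 4 ≤ c.length) : s(c.snd, c.penultimate) ∉ c.edges := by
  have hedges := congrArg Walk.edges (c.cons_tail_eq hc.not_nil)
  rw [edges_cons] at hedges
  rw [← hedges, List.mem_cons, Sym2.eq_iff]
  rintro ((⟨hsnd, -⟩ | ⟨-, hpen⟩) | hmem)
  · exact (c.adj_snd hc.not_nil).ne hsnd.symm
  · exact (c.adj_penultimate hc.not_nil).ne hpen
  · have h2 : c.penultimate = c.getVert 2 := by
      rw [hc.isPath_tail.eq_snd_of_mem_edges hmem, snd, getVert_tail]
    have := hc.getVert_injOn (by constructor <;> omega) (by constructor <;> omega) h2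
    omega

theorem two_le_length_of_not_adj (p : G.Walk u v) (hne : u ≠ v) (hnadj : ¬G.Adj u v) :
    2 ≤ p.length := by
  cases p with
  | nil => exact absurd rfl hne
  | cons h p =>
    cases p with
    | nil => exact absurd h hnadj
    | cons _ _ => simp

theorem isCycle_append_reverse {p q : G.Walk u v} (hp : p.IsPath) (hq : q.IsPath)
    (hpq : ∀ z ∈ p.support, z ∈ q.support → z = u ∨ z = v) (hlen : 3 ≤ p.length + q.length) :
    (p.append q.reverse).IsCycle := by
  have hnil : ¬(p.append q.reverse).Nil := by
    rw [← length_eq_zero_iff, length_append, length_reverse]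
    omega
  rw [isCycle_iff_isPath_tail_and_le_length, isPath_def, support_tail_of_not_nil _ hnil,
    tail_support_append, List.nodup_append]
  refine ⟨⟨hp.support_nodup.tail, hq.reverse.support_nodup.tail, ?_⟩,
    by rw [length_append, length_reverse]; omega⟩
  intro z hzp z' hzq rfl
  have hzq' : z ∈ q.support := by simpa using List.mem_of_mem_tail hzq
  rcases hpq z (List.mem_of_mem_tail hzp) hzq' with rfl | rfl
  · exact (List.nodup_cons.mp (p.cons_tail_support ▸ hp.support_nodup)).1 hzp
  · exact (List.nodup_cons.mp (q.reverse.cons_tail_support ▸ hq.reverse.support_nodup)).1 hzq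

theorem isChordless_of_forall_length_le {T : Set V} (p : G.Walk u v)
    (hpT : ∀ z ∈ p.support, z ∈ T)
    (hmin : ∀ q : G.Walk u v, (∀ z ∈ q.support, z ∈ T) → p.length ≤ q.length) :
    p.IsChordless := by
  rw [isChordless_iff_forall_mem_edges]
  intro a b ha hb hab
  obtain ⟨i, rfl, hi⟩ := mem_support_iff_exists_getVert.mp ha
  obtain ⟨j, rfl, hj⟩ := mem_support_iff_exists_getVert.mp hb
  wlog hij : i < j generalizing i j
  · have hne : i ≠ j := fun h => hab.ne (by rw [h])
    rw [Sym2.eq_swap]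
    exact this j hj hb i hi ha hab.symm (by omega)
  let shortcut : G.Walk u v := (p.take i).append (cons hab (p.drop j))
  have hshortcut : ∀ z ∈ shortcut.support, z ∈ T := by
    intro z hz
    simp only [shortcut, mem_support_append_iff, support_cons, List.mem_cons] at hz
    rcases hz with hz | hz | hz
    · exact hpT z ((p.isSubwalk_take i).support_subset hz)
    · exact hz ▸ hpT _ ha
    · exact hpT z ((p.isSubwalk_drop j).support_subset hz)
  have hlen := hmin shortcut hshortcut
  simp only [shortcut, length_append, length_cons, take_length, drop_length] at hlen
  obtain rfl : j = i + 1 := by omega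
  exact (mem_edges_toSubgraph p).mp (p.toSubgraph_adj_getVert (by omega))

theorem exists_isPath_isChordless_of_support_subset {T : Set V} (w : G.Walk u v)
    (hw : ∀ z ∈ w.support, z ∈ T) :
    ∃ p : G.Walk u v, p.IsPath ∧ p.IsChordless ∧ ∀ z ∈ p.support, z ∈ T := by
  classical
  let walksIn : Set (G.Walk u v) := {q | ∀ z ∈ q.support, z ∈ T}
  let shortest := Function.argminOn length walksIn ⟨w, hw⟩
  have hshortest : shortest ∈ walksIn := Function.argminOn_mem _ _ _
  have hbypass : shortest.bypass ∈ walksIn := fun z hz =>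
    hshortest z (shortest.support_bypass_subset_support hz)
  refine ⟨shortest.bypass, shortest.bypass_isPath,
    isChordless_of_forall_length_le _ hbypass fun q hq => ?_, hbypass⟩
  exact shortest.length_bypass_le_length.trans (Function.argminOn_le length walksIn hq)

end Walk

def componentIn (G : SimpleGraph V) (U : Set V) (b : V) : Set V :=
  {v | ∃ p : G.Walk b v, ∀ z ∈ p.support, z ∈ U}

def outerBoundary (G : SimpleGraph V) (C : Set V) : Set V :=
  {v | v ∉ C ∧ ∃ c ∈ C, G.Adj c v}

section componentIn

variable {U : Set V} {b : V}

theorem componentIn_subset : G.componentIn U b ⊆ U :=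
  fun _ ⟨p, hp⟩ => hp _ p.end_mem_support

theorem mem_componentIn_self (hb : b ∈ U) : b ∈ G.componentIn U b :=
  ⟨.nil, by simpa using hb⟩

theorem mem_componentIn_of_adj {c v : V} (hc : c ∈ G.componentIn U b) (hcv : G.Adj c v)
    (hv : v ∈ U) : v ∈ G.componentIn U b := by
  obtain ⟨p, hp⟩ := hc
  refine ⟨p.concat hcv, fun z hz => ?_⟩
  rw [Walk.support_concat, List.mem_append, List.mem_singleton] at hz
  exact hz.elim (hp z) (· ▸ hv)

theorem support_subset_componentIn {v : V} (p : G.Walk b v) (hp : ∀ z ∈ p.support, z ∈ U) :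
    ∀ z ∈ p.support, z ∈ G.componentIn U b := by
  classical
  intro z hz
  exact ⟨p.takeUntil z hz, fun t ht => hp t (p.support_takeUntil_subset_support hz ht)⟩

theorem exists_walk_of_mem_componentIn {c₁ c₂ : V} (hc₁ : c₁ ∈ G.componentIn U b)
    (hc₂ : c₂ ∈ G.componentIn U b) :
    ∃ p : G.Walk c₁ c₂, ∀ z ∈ p.support, z ∈ G.componentIn U b := by
  obtain ⟨p₁, hp₁⟩ := hc₁
  obtain ⟨p₂, hp₂⟩ := hc₂
  refine ⟨p₁.reverse.append p₂, fun z hz => ?_⟩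
  rw [Walk.mem_support_append_iff, Walk.support_reverse, List.mem_reverse] at hz
  exact hz.elim (support_subset_componentIn p₁ hp₁ z) (support_subset_componentIn p₂ hp₂ z)

theorem outerBoundary_componentIn_subset_neighborSet {a : V} :
    G.outerBoundary (G.componentIn (insert a (G.neighborSet a))ᶜ b) ⊆ G.neighborSet a := by
  rintro s ⟨hsC, c, hc, hcs⟩
  have hcU := componentIn_subset hc
  simp only [Set.mem_compl_iff, Set.mem_insert_iff, mem_neighborSet, not_or] at hcU
  by_contra hsa
  refine hsC (mem_componentIn_of_adj hc hcs ?_)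
  rintro (rfl | h)
  exacts [hcU.2 hcs.symm, hsa h]

end componentIn

theorem neighborSet_subset_union_outerBoundary {C : Set V} {c : V} (hc : c ∈ C) :
    G.neighborSet c ⊆ C ∪ G.outerBoundary C :=
  fun _ hw => or_iff_not_imp_left.mpr fun hwC => ⟨hwC, c, hc, hw⟩

theorem neighborSet_subset_compl_union_outerBoundary {C : Set V} {k : V}
    (hk : k ∉ C ∪ G.outerBoundary C) :
    G.neighborSet k ⊆ (C ∪ G.outerBoundary C)ᶜ ∪ G.outerBoundary C := by
  intro w hkw
  simp only [Set.mem_union, not_or] at hk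
  have hwC : w ∉ C := fun hwC => hk.2 ⟨hk.1, w, hwC, hkw.symm⟩
  by_cases hwB : w ∈ G.outerBoundary C
  · exact .inr hwB
  · exact .inl (by simp [hwC, hwB])

theorem isClique_neighborSet_of_induce {s : Set V} {v : s} (hv : G.neighborSet v ⊆ s)
    (h : (G.induce s).IsClique ((G.induce s).neighborSet v)) : G.IsClique (G.neighborSet v) :=
  fun x hx y hy hxy =>
    h (x := ⟨x, hv hx⟩) hx (y := ⟨y, hv hy⟩) hy (fun h => hxy (congrArg Subtype.val h))

theorem exists_mem_isClique_neighborSet_of_induce {K S : Set V}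
    (h : ∀ T : Set ↥(K ∪ S), (G.induce (K ∪ S)).IsClique T → ∀ t ∉ T,
      ∃ v ∉ T, (G.induce (K ∪ S)).IsClique ((G.induce (K ∪ S)).neighborSet v))
    (hS : G.IsClique S) (hKS : Disjoint K S) (hK : K.Nonempty)
    (hN : ∀ k ∈ K, G.neighborSet k ⊆ K ∪ S) :
    ∃ v ∈ K, G.IsClique (G.neighborSet v) := by
  obtain ⟨k, hk⟩ := hK
  obtain ⟨⟨v, hvKS⟩, hvS, hv⟩ := h (Subtype.val ⁻¹' S)
    (fun x hx y hy hxy => hS hx hy (Subtype.val_injective.ne hxy))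
    ⟨k, .inl hk⟩ (hKS.notMem_of_mem_left hk)
  have hvK : v ∈ K := hvKS.resolve_right hvS
  exact ⟨v, hvK, isClique_neighborSet_of_induce (hN v hvK) hv⟩

end SimpleGraph

theorem Chordal.comap {V W : Type} {G : SimpleGraph V} {H : SimpleGraph W} (f : H ↪g G)
    (hG : Chordal G) : Chordal H := by
  intro u c hc hlen
  obtain ⟨a, b, ha, hb, hab, habc⟩ :=
    hG _ (c.map f.toHom) (hc.map f.injective) (by rwa [Walk.length_map])
  rw [Walk.support_map, List.mem_map] at ha hb
  obtain ⟨a, ha, rfl⟩ := ha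
  obtain ⟨b, hb, rfl⟩ := hb
  refine ⟨a, b, ha, hb, f.map_adj_iff.mp hab, fun h => habc ?_⟩
  rw [Walk.edges_map]
  exact List.mem_map_of_mem h

theorem Chordal.of_isPerfectEliminationOrder {V : Type} {G : SimpleGraph V} {r : V → ℕ}
    (hinj : Function.Injective r) (hr : G.IsPerfectEliminationOrder r) : Chordal G := by
  intro u c hc hlen
  classical
  obtain ⟨m, hm, hmin⟩ := c.support.toFinset.exists_min_image r ⟨u, by simp⟩
  rw [List.mem_toFinset] at hm
  let c' := c.rotate m hm
  have hc' : c'.IsCycle := hc.rotate hm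
  have hlen' : 4 ≤ c'.length := by simpa [c'] using hlen
  have hsupp : ∀ z ∈ c'.support, z ∈ c.support := fun z => (c.mem_support_rotate_iff m hm).mp
  have hlater : ∀ z, G.Adj m z → z ∈ c'.support → r m < r z := fun z hz hzc =>
    (hmin z (List.mem_toFinset.mpr (hsupp z hzc))).lt_of_ne (hinj.ne hz.ne)
  have hsnd := c'.adj_snd hc'.not_nil
  have hpen := (c'.adj_penultimate hc'.not_nil).symm
  refine ⟨c'.snd, c'.penultimate, hsupp _ (c'.getVert_mem_support _),
    hsupp _ (c'.getVert_mem_support _),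
    hr m ⟨hsnd, hlater _ hsnd (c'.getVert_mem_support _)⟩
      ⟨hpen, hlater _ hpen (c'.getVert_mem_support _)⟩ hc'.snd_ne_penultimate,
    fun h => hc'.snd_penultimate_notMem_edges hlen' ((c.rotate_edges m hm).perm.mem_iff.mpr h)⟩

open SimpleGraph.Walk in
theorem Chordal.adj_of_walks_through_separated {V : Type} {G : SimpleGraph V} (hG : Chordal G)
    {x y : V} (hxy : x ≠ y) {K₁ K₂ : Set V} (hdisj : Disjoint K₁ K₂)
    (hK : ∀ u ∈ K₁, ∀ v ∈ K₂, ¬G.Adj u v) (w₁ w₂ : G.Walk x y)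
    (hw₁ : ∀ z ∈ w₁.support, z ∈ insert x (insert y K₁))
    (hw₂ : ∀ z ∈ w₂.support, z ∈ insert x (insert y K₂)) :
    G.Adj x y := by
  by_contra hnadj
  obtain ⟨p₁, hp₁, hc₁, hs₁⟩ := w₁.exists_isPath_isChordless_of_support_subset hw₁
  obtain ⟨p₂, hp₂, hc₂, hs₂⟩ := w₂.exists_isPath_isChordless_of_support_subset hw₂
  have hK₁ : ∀ z ∈ p₁.support, z ∉ p₂.support → z ∈ K₁ := by
    intro z hz₁ hz₂
    rcases hs₁ z hz₁ with rfl | rfl | hz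
    exacts [absurd p₂.start_mem_support hz₂, absurd p₂.end_mem_support hz₂, hz]
  have hK₂ : ∀ z ∈ p₂.support, z ∉ p₁.support → z ∈ K₂ := by
    intro z hz₂ hz₁
    rcases hs₂ z hz₂ with rfl | rfl | hz
    exacts [absurd p₁.start_mem_support hz₁, absurd p₁.end_mem_support hz₁, hz]
  have hcommon : ∀ z ∈ p₁.support, z ∈ p₂.support → z = x ∨ z = y := by
    intro z hz₁ hz₂
    rcases hs₁ z hz₁ with rfl | rfl | hzK₁
    · exact .inl rfl
    · exact .inr rfl
    rcases hs₂ z hz₂ with rfl | rfl | hzK₂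
    · exact .inl rfl
    · exact .inr rfl
    exact absurd hzK₂ (hdisj.notMem_of_mem_left hzK₁)
  have hlen₁ := p₁.two_le_length_of_not_adj hxy hnadj
  have hlen₂ := p₂.two_le_length_of_not_adj hxy hnadj
  obtain ⟨a, b, ha, hb, hab, habc⟩ := hG x (p₁.append p₂.reverse)
    (isCycle_append_reverse hp₁ hp₂ hcommon (by omega))
    (by rw [length_append, length_reverse]; omega)
  simp only [mem_support_append_iff, support_reverse, List.mem_reverse] at ha hb
  simp only [edges_append, edges_reverse, List.mem_append, List.mem_reverse, not_or] at habc
  by_cases ha₂ : a ∈ p₂.support <;> by_cases hb₂ : b ∈ p₂.support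
  · exact habc.2 (hc₂.mem_edges ha₂ hb₂ hab)
  · have hb₁ : b ∈ p₁.support := hb.resolve_right hb₂
    by_cases ha₁ : a ∈ p₁.support
    · exact habc.1 (hc₁.mem_edges ha₁ hb₁ hab)
    · exact hK b (hK₁ b hb₁ hb₂) a (hK₂ a ha₂ ha₁) hab.symm
  · have ha₁ : a ∈ p₁.support := ha.resolve_right ha₂
    by_cases hb₁ : b ∈ p₁.support
    · exact habc.1 (hc₁.mem_edges ha₁ hb₁ hab)
    · exact hK a (hK₁ a ha₁ ha₂) b (hK₂ b hb₂ hb₁) hab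
  · exact habc.1 (hc₁.mem_edges (ha.resolve_right ha₂) (hb.resolve_right hb₂) hab)

theorem Chordal.isClique_outerBoundary_componentIn {V : Type} {G : SimpleGraph V}
    (hG : Chordal G) (a b : V) :
    G.IsClique (G.outerBoundary (G.componentIn (insert a (G.neighborSet a))ᶜ b)) := by
  intro x hx y hy hxy
  have hax : G.Adj a x := outerBoundary_componentIn_subset_neighborSet hx
  have hay : G.Adj a y := outerBoundary_componentIn_subset_neighborSet hy
  have haC : ∀ c ∈ G.componentIn (insert a (G.neighborSet a))ᶜ b, c ≠ a ∧ ¬G.Adj a c := by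
    intro c hc
    simpa [not_or] using componentIn_subset hc
  obtain ⟨-, c₁, hc₁, hc₁x⟩ := hx
  obtain ⟨-, c₂, hc₂, hc₂y⟩ := hy
  obtain ⟨p, hp⟩ := exists_walk_of_mem_componentIn hc₁ hc₂
  refine hG.adj_of_walks_through_separated hxy (K₁ := {a})
    (Set.disjoint_singleton_left.mpr fun ha => (haC a ha).1 rfl)
    (fun u hu c hc => hu ▸ (haC c hc).2)
    (.cons hax.symm (.cons hay .nil)) (.cons hc₁x.symm (p.concat hc₂y)) (by simp) ?_
  intro z hz
  simp only [Walk.support_cons, Walk.support_concat, List.mem_cons, List.mem_append,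
    List.not_mem_nil, or_false] at hz
  rcases hz with rfl | hz | rfl
  exacts [.inl rfl, .inr (.inr (hp z hz)), .inr (.inl rfl)]

theorem Chordal.exists_isClique_neighborSet_notMem {V : Type} [Finite V] {G : SimpleGraph V}
    (hG : Chordal G) {S : Set V} (hS : G.IsClique S) {u : V} (hu : u ∉ S) :
    ∃ v ∉ S, G.IsClique (G.neighborSet v) := by
  induction h : Nat.card V using Nat.strong_induction_on generalizing V with
  | _ n ih =>
  subst h
  by_cases hcomplete : G.IsClique Set.univ
  · exact ⟨u, hu, hcomplete.subset (Set.subset_univ _)⟩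
  obtain ⟨a, -, b, -, hab, hnadj⟩ : ∃ a ∈ Set.univ, ∃ b ∈ Set.univ, a ≠ b ∧ ¬G.Adj a b := by
    simpa [IsClique, Set.Pairwise] using hcomplete
  set C := G.componentIn (insert a (G.neighborSet a))ᶜ b
  set B := G.outerBoundary C
  have hbC : b ∈ C := mem_componentIn_self (by simp [hab.symm, hnadj])
  have haC : a ∉ C := fun h => componentIn_subset h (by simp)
  have haB : a ∉ B := fun h => G.loopless.irrefl a (outerBoundary_componentIn_subset_neighborSet h)
  have hCB : Disjoint C B := Set.disjoint_right.mpr fun _ h => h.1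
  have hside : ∀ K, Disjoint K B → K.Nonempty → (∀ k ∈ K, G.neighborSet k ⊆ K ∪ B) →
      ∀ z ∉ K ∪ B, ∃ v ∈ K, G.IsClique (G.neighborSet v) := fun K hKB hK hN z hz =>
    exists_mem_isClique_neighborSet_of_induce
      (fun T hT t ht => ih _ (Finite.card_subtype_lt hz) (hG.comap (Embedding.induce _)) hT ht rfl)
      (hG.isClique_outerBoundary_componentIn a b) hKB hK hN
  obtain ⟨v₁, hv₁, hsimp₁⟩ := hside (C ∪ B)ᶜ
    (disjoint_compl_left.mono_right Set.subset_union_right) ⟨a, by simp [haC, haB]⟩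
    (fun _ hk => neighborSet_subset_compl_union_outerBoundary hk)
    b (by simp [hbC, hCB.notMem_of_mem_left hbC])
  obtain ⟨v₂, hv₂, hsimp₂⟩ := hside C hCB ⟨b, hbC⟩
    (fun _ hc => neighborSet_subset_union_outerBoundary hc) a (by simp [haC, haB])
  simp only [Set.mem_compl_iff, Set.mem_union, not_or] at hv₁
  have hv₁₂ : v₁ ≠ v₂ := fun h => hv₁.1 (h ▸ hv₂)
  have hnadj₁₂ : ¬G.Adj v₁ v₂ := fun h => hv₁.2 ⟨hv₁.1, v₂, hv₂, h.symm⟩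
  by_cases h₁ : v₁ ∈ S
  · exact ⟨v₂, fun h₂ => hnadj₁₂ (hS h₁ h₂ hv₁₂), hsimp₂⟩
  · exact ⟨v₁, h₁, hsimp₁⟩

theorem Chordal.exists_isPerfectEliminationOrder {V : Type} [Finite V] {G : SimpleGraph V}
    (hG : Chordal G) : ∃ r : V ↪ ℕ, G.IsPerfectEliminationOrder r := by
  induction h : Nat.card V using Nat.strong_induction_on generalizing V with
  | _ n ih =>
  subst h
  classical
  rcases isEmpty_or_nonempty V with hV | ⟨⟨u⟩⟩
  · exact ⟨Function.Embedding.ofIsEmpty, isEmptyElim⟩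
  obtain ⟨v, -, hv⟩ := hG.exists_isClique_neighborSet_notMem (S := ∅) isClique_empty
    (Set.notMem_empty u)
  obtain ⟨r', hr'⟩ := ih _ (Finite.card_subtype_lt (p := (· ≠ v)) (not_not.mpr rfl))
    (hG.comap (Embedding.induce {u | u ≠ v})) rfl
  let r : V ↪ ℕ := (Equiv.optionSubtypeNe v).symm.toEmbedding.trans
    ((r'.trans ⟨Nat.succ, Nat.succ_injective⟩).optionElim 0 (by simp))
  have hrv : r v = 0 := by simp [r]
  have hr : ∀ w (hw : w ≠ v), r w = r' ⟨w, hw⟩ + 1 := fun w hw => by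
    simp [r, Equiv.optionSubtypeNe_symm_of_ne hw]
  refine ⟨r, isPerfectEliminationOrder_of_induce hv (by simp [hrv]) (hr'.of_lt_imp_lt ?_)⟩
  rintro ⟨x, hx⟩ ⟨y, hy⟩
  simp [hr x hx, hr y hy]

/-- a finite graph is chordal iff it admits a perfect elimination
ordering, i.e. an injective numbering `r` of the vertices such that the later
neighbours of every vertex form a clique. -/
theorem chordal_iff_exists_perfect_elimination_ordering
    {V : Type} [Fintype V] (G : SimpleGraph V) :
    Chordal G ↔
      ∃ r : V ↪ ℕ, ∀ u v w : V, G.Adj u v → G.Adj u w →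
        r u < r v → r u < r w → v ≠ w → G.Adj v w := by
  constructor
  · intro hG
    obtain ⟨r, hr⟩ := hG.exists_isPerfectEliminationOrder
    exact ⟨r, fun u v w huv huw hv hw hvw => hr u ⟨huv, hv⟩ ⟨huw, hw⟩ hvw⟩
  · rintro ⟨r, hr⟩
    exact Chordal.of_isPerfectEliminationOrder r.injective
      fun u v hv w hw hvw => hr u v w hv.1 hw.1 hv.2 hw.2 hvw
end

section
/- In the graph G' obtained from G by subdividing each edge twice, any closed trail that contains at least one endpoint of every edge of G' must use every edge of G', i.e., it is an Euler tour of G'. -/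
open SimpleGraph

section Aux
variable {V : Type} [LinearOrder V] {G : SimpleGraph V}

lemma emin_ne_emax (e : G.edgeSet) : Sym2.emin (e : Sym2 V) ≠ Sym2.emax (e : Sym2 V) := by
  obtain ⟨e, he⟩ := e
  induction e with
  | _ a b =>
    have hab : a ≠ b := fun h => G.not_isDiag_of_mem_edgeSet he (Sym2.mk_isDiag_iff.mpr h)
    exact ne_of_lt (min_lt_max.mpr hab)

set_option linter.unnecessarySeqFocus false in
lemma adj_x_iff (e : G.edgeSet) (z : V ⊕ (G.edgeSet × Bool)) :
    (subdiv2 G).Adj (Sum.inr (e, false)) z ↔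
      z = Sum.inl (Sym2.emin (e : Sym2 V)) ∨ z = Sum.inr (e, true) := by
  rcases z with v | ⟨e', b'⟩ <;>
    simp [subdiv2, fromRel_adj, subdivRel, Subtype.ext_iff, eq_comm, and_comm] <;>
    aesop

set_option linter.unnecessarySeqFocus false in
lemma adj_y_iff (e : G.edgeSet) (z : V ⊕ (G.edgeSet × Bool)) :
    (subdiv2 G).Adj (Sum.inr (e, true)) z ↔
      z = Sum.inr (e, false) ∨ z = Sum.inl (Sym2.emax (e : Sym2 V)) := by
  rcases z with v | ⟨e', b'⟩ <;>
    simp [subdiv2, fromRel_adj, subdivRel, Subtype.ext_iff, eq_comm, and_comm] <;>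
    aesop

lemma edge_cases {f : Sym2 (V ⊕ (G.edgeSet × Bool))} (hf : f ∈ (subdiv2 G).edgeSet) :
    ∃ e : G.edgeSet,
      f = s(Sum.inl (Sym2.emin (e : Sym2 V)), Sum.inr (e, false)) ∨
      f = s(Sum.inr (e, false), Sum.inr (e, true)) ∨
      f = s(Sum.inr (e, true), Sum.inl (Sym2.emax (e : Sym2 V))) := by
  induction f with
  | _ a b =>
    rw [SimpleGraph.mem_edgeSet] at hf
    rcases a with v | ⟨e, b0⟩ <;> rcases b with w | ⟨e', b'⟩
    · exact absurd hf.2 (by rintro (h | h) <;> exact h)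
    · rcases b' with _ | _
      · have := (adj_x_iff e' (Sum.inl v)).mp hf.symm
        refine ⟨e', Or.inl ?_⟩
        simp at this
        rw [this]
      · have := (adj_y_iff e' (Sum.inl v)).mp hf.symm
        refine ⟨e', Or.inr (Or.inr ?_)⟩
        simp at this
        rw [this, Sym2.eq_swap]
    · rcases b0 with _ | _
      · have := (adj_x_iff e (Sum.inl w)).mp hf
        refine ⟨e, Or.inl ?_⟩
        simp at this
        rw [this, Sym2.eq_swap]
      · have := (adj_y_iff e (Sum.inl w)).mp hf
        refine ⟨e, Or.inr (Or.inr ?_)⟩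
        simp at this
        rw [this]
    · rcases b0 with _ | _
      · have := (adj_x_iff e (Sum.inr (e', b'))).mp hf
        simp at this
        obtain ⟨h1, h2⟩ := this
        refine ⟨e, Or.inr (Or.inl ?_)⟩
        rw [h1, h2]
      · have := (adj_y_iff e (Sum.inr (e', b'))).mp hf
        simp at this
        obtain ⟨h1, h2⟩ := this
        refine ⟨e, Or.inr (Or.inl ?_)⟩
        rw [h1, h2, Sym2.eq_swap]
end Aux

section Walks
variable {W : Type} {H : SimpleGraph W}

lemma exists_edge_of_mem_support_ne {a b w : W} (p : H.Walk a b) (hw : w ∈ p.support)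
    (hne : w ≠ b) : ∃ f ∈ p.edges, w ∈ f := by
  induction p with
  | nil => simp at hw; exact absurd hw hne
  | @cons a c b h q ih =>
    rw [SimpleGraph.Walk.support_cons, List.mem_cons] at hw
    rcases hw with rfl | hw
    · exact ⟨s(w, c), by simp, by simp⟩
    · obtain ⟨f, hf, hwf⟩ := ih hw hne
      exact ⟨f, by simp [hf], hwf⟩

lemma exists_edge_of_mem_support_closed {a w : W} (p : H.Walk a a) (hw : w ∈ p.support)
    (hnil : ¬p.Nil) : ∃ f ∈ p.edges, w ∈ f := by
  by_cases hwa : w = a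
  · subst hwa
    cases p with
    | nil => exact absurd SimpleGraph.Walk.Nil.nil hnil
    | @cons _ c _ h q => exact ⟨s(w, c), by simp, by simp⟩
  · exact exists_edge_of_mem_support_ne p hw hwa

lemma list_len_le_one {α : Type} {l : List α} (h : l.Nodup) {c : α} (ha : ∀ x ∈ l, x = c) :
    l.length ≤ 1 := by
  match l with
  | [] => simp
  | [x] => simp
  | x :: y :: t =>
    exfalso
    have hx : x = c := ha x (by simp)
    have hy : y = c := ha y (by simp)
    simp [hx, hy] at h

open Classical in
lemma two_edges {a : W} {p : H.Walk a a} (hp : p.IsTrail) (hnil : ¬p.Nil)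
    {w x y : W} (hxy : x ≠ y)
    (hnbr : ∀ z, H.Adj w z ↔ z = x ∨ z = y) (hw : w ∈ p.support) :
    s(w, x) ∈ p.edges ∧ s(w, y) ∈ p.edges := by
  classical
  set L := p.edges.filter (fun f => decide (w ∈ f)) with hL
  have hLnodup : L.Nodup := hp.edges_nodup.filter _
  have hmem : ∀ f ∈ L, f = s(w, x) ∨ f = s(w, y) := by
    intro f hf
    rw [hL, List.mem_filter] at hf
    obtain ⟨hfe, hwf⟩ := hf
    rw [decide_eq_true_eq] at hwf
    have hadj := p.edges_subset_edgeSet hfe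
    induction f with
    | _ c d =>
      rw [SimpleGraph.mem_edgeSet] at hadj
      rcases Sym2.mem_iff.mp hwf with rfl | rfl
      · rcases (hnbr d).mp hadj with rfl | rfl
        · exact Or.inl rfl
        · exact Or.inr rfl
      · rw [Sym2.eq_swap]
        rcases (hnbr c).mp (hadj.symm) with rfl | rfl
        · exact Or.inl rfl
        · exact Or.inr rfl
  have hAB : s(w, x) ≠ s(w, y) := fun h => hxy (Sym2.congr_right.mp h)
  have hne : L ≠ [] := by
    obtain ⟨f, hf, hwf⟩ := exists_edge_of_mem_support_closed p hw hnil
    intro h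
    have : f ∈ L := by rw [hL, List.mem_filter]; exact ⟨hf, by simpa⟩
    simp [h] at this
  have heven : Even L.length := by
    have := hp.even_countP_edges_iff w
    rw [List.countP_eq_length_filter] at this
    exact (this).mpr (fun h => absurd rfl h)
  have key : ∀ c ∈ L, ∃ d ∈ L, d ≠ c := by
    intro c hc
    by_contra hcon
    push_neg at hcon
    have : L.length ≤ 1 := list_len_le_one hLnodup (fun z hz => hcon z hz)
    interval_cases h : L.length
    · simp [List.length_eq_zero_iff] at h; exact hne h
    · rcases heven with ⟨k, hk⟩; omega
  have hsub : s(w, x) ∈ L ∧ s(w, y) ∈ L := by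
    have hLne : ∃ c, c ∈ L := by
      rcases L with _ | ⟨c, t⟩
      · exact absurd rfl hne
      · exact ⟨c, by simp⟩
    obtain ⟨c, hc⟩ := hLne
    obtain ⟨d, hd, hdc⟩ := key c hc
    rcases hmem c hc with rfl | rfl <;> rcases hmem d hd with rfl | rfl
    · exact absurd rfl hdc
    · exact ⟨hc, hd⟩
    · exact ⟨hd, hc⟩
    · exact absurd rfl hdc
  exact ⟨(List.mem_filter.mp hsub.1).1, (List.mem_filter.mp hsub.2).1⟩
end Walks

open Classical in
/-- in the twice-subdivided graph `G'`, any closed trail that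
contains at least one endpoint of every edge of `G'` must use every edge of `G'`,
i.e. it is an Euler tour of `G'`. -/
theorem closed_trail_dominating_is_eulerian_subdiv2
    {V : Type} [LinearOrder V] (G : SimpleGraph V)
    {u : V ⊕ (G.edgeSet × Bool)} (p : (subdiv2 G).Walk u u) (hp : p.IsTrail)
    (hdom : ∀ e ∈ (subdiv2 G).edgeSet, ∃ x, x ∈ e ∧ x ∈ p.support) :
    p.IsEulerian := by
  classical
  rw [SimpleGraph.Walk.isEulerian_iff]
  refine ⟨hp, fun f hf => ?_⟩
  obtain ⟨e, hcase⟩ := edge_cases hf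
  have hA : (subdiv2 G).Adj (Sum.inl (Sym2.emin (e : Sym2 V))) (Sum.inr (e, false)) :=
    ((adj_x_iff e _).mpr (Or.inl rfl)).symm
  have hB : (subdiv2 G).Adj (Sum.inr (e, false)) (Sum.inr (e, true)) :=
    (adj_x_iff e _).mpr (Or.inr rfl)
  have hC : (subdiv2 G).Adj (Sum.inr (e, true)) (Sum.inl (Sym2.emax (e : Sym2 V))) :=
    (adj_y_iff e _).mpr (Or.inr rfl)
  by_cases hnil : p.Nil
  · exfalso
    have hsupp : p.support = [u] := SimpleGraph.Walk.nil_iff_support_eq.mp hnil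
    obtain ⟨z1, hz1, hz1s⟩ := hdom _ ((subdiv2 G).mem_edgeSet.mpr hA)
    obtain ⟨z2, hz2, hz2s⟩ := hdom _ ((subdiv2 G).mem_edgeSet.mpr hC)
    rw [hsupp, List.mem_singleton] at hz1s hz2s
    subst hz1s; subst hz2s
    rcases Sym2.mem_iff.mp hz1 with h1 | h1 <;> rcases Sym2.mem_iff.mp hz2 with h2 | h2 <;>
        rw [h1] at h2
    · simp at h2
    · exact emin_ne_emax e (Sum.inl.inj h2)
    · simp at h2
    · simp at h2
  · -- nontrivial closed trail
    obtain ⟨z, hz, hzs⟩ := hdom _ ((subdiv2 G).mem_edgeSet.mpr hB)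
    have hxsupp : Sum.inr (e, false) ∈ p.support := by
      rcases Sym2.mem_iff.mp hz with rfl | rfl
      · exact hzs
      · have := two_edges hp hnil (by simp) (adj_y_iff e) hzs
        exact SimpleGraph.Walk.snd_mem_support_of_mem_edges p this.1
    have hx := two_edges hp hnil (w := Sum.inr (e, false))
      (x := Sum.inl (Sym2.emin (e : Sym2 V))) (y := Sum.inr (e, true))
      (by simp) (adj_x_iff e) hxsupp
    have hysupp : Sum.inr (e, true) ∈ p.support :=
      SimpleGraph.Walk.snd_mem_support_of_mem_edges p hx.2
    have hy := two_edges hp hnil (w := Sum.inr (e, true))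
      (x := Sum.inr (e, false)) (y := Sum.inl (Sym2.emax (e : Sym2 V)))
      (by simp) (adj_y_iff e) hysupp
    rcases hcase with rfl | rfl | rfl
    · rw [Sym2.eq_swap]; exact hx.1
    · exact hx.2
    · exact hy.2
end
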